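/- arXiv:1211.1490 — 2 statements merged into one kernel-verified Lean document; each statement's English description precedes it below -/
import Mathlib

section
/- Generalization to clusters (area version): let C₁, …, C_n be nonempty finite subsets of ℝ². Among all selections choosing one point pᵢ ∈ conv(Cᵢ) for each i, there is a selection maximizing the area of conv({p₁,…,p_n}) in which every chosen point pᵢ is an extreme point of conv(Cᵢ). -/
/-!
For a fixed finite set `F`, the volume of `conv (insert x F)` is a convex function of `x`.
To compare `x = la • a + lb • b` with `a` and `b`, slice the three hulls by the lines parallel
to `b - a`: each slice of the hull for `x` lies in `la • (slice for a) + lb • (slice for b)`,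
and on a line the length of such a Minkowski combination of intervals is at most
`la |A| + lb |B|`; Fubini integrates this over the lines. Hence the area of `conv {p₁, …, pₙ}`
is convex in each `pᵢ` separately, so each `pᵢ ∈ conv Cᵢ` can be moved, one at a time and
without losing area, to an extreme point of `conv Cᵢ`; among the finitely many extreme
selections take the best.
-/

open MeasureTheory Set Function Metric
open scoped Pointwise

theorem Set.OrdConnected.volume_eq_ediam {s : Set ℝ} (hs : s.OrdConnected) :
    volume s = ediam s := by
  refine le_antisymm (Real.volume_le_diam s) (ediam_le fun x hx y hy => ?_)
  rw [edist_dist, Real.dist_eq, abs_sub_comm, ← Real.volume_interval]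
  exact measure_mono (hs.uIcc_subset hx hy)

theorem Real.volume_smul_add_smul_le {A B : Set ℝ} (hA : A.OrdConnected) (hB : B.OrdConnected)
    {a b : ℝ} (ha : 0 ≤ a) (hb : 0 ≤ b) :
    volume (a • A + b • B) ≤ ENNReal.ofReal a * volume A + ENNReal.ofReal b * volume B := by
  calc volume (a • A + b • B) ≤ ediam (a • A + b • B) := Real.volume_le_diam _
    _ ≤ ediam (a • A) + ediam (b • B) := ediam_add_le _ _
    _ = _ := by
      rw [ediam_smul₀, ediam_smul₀, hA.volume_eq_ediam, hB.volume_eq_ediam,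
        ← Real.enorm_of_nonneg ha, ← Real.enorm_of_nonneg hb]
      rfl

theorem Convex.ordConnected_preimage_prodMk {α : Type*} [AddCommGroup α] [Module ℝ α]
    {s : Set (α × ℝ)} (hs : Convex ℝ s) (w : α) : (Prod.mk w ⁻¹' s).OrdConnected :=
  (hs.affine_preimage ((AffineMap.const ℝ ℝ w).prod (AffineMap.id ℝ ℝ))).ordConnected

theorem MeasureTheory.Measure.prod_volume_le_of_preimage_prodMk_subset {α : Type*}
    [MeasurableSpace α] (ν : Measure α) [SFinite ν] {s t u : Set (α × ℝ)} (hs : MeasurableSet s)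
    (ht : MeasurableSet t) (hu : MeasurableSet u)
    (htc : ∀ w, (Prod.mk w ⁻¹' t).OrdConnected) (huc : ∀ w, (Prod.mk w ⁻¹' u).OrdConnected)
    {a b : ℝ} (ha : 0 ≤ a) (hb : 0 ≤ b)
    (hsub : ∀ w, Prod.mk w ⁻¹' s ⊆ a • Prod.mk w ⁻¹' t + b • Prod.mk w ⁻¹' u) :
    ν.prod volume s ≤
      ENNReal.ofReal a * ν.prod volume t + ENNReal.ofReal b * ν.prod volume u := by
  rw [Measure.prod_apply hs, Measure.prod_apply ht, Measure.prod_apply hu,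
    ← lintegral_const_mul _ (measurable_measure_prodMk_left ht),
    ← lintegral_const_mul _ (measurable_measure_prodMk_left hu),
    ← lintegral_add_left ((measurable_measure_prodMk_left ht).const_mul _)]
  exact lintegral_mono fun w =>
    (measure_mono (hsub w)).trans (Real.volume_smul_add_smul_le (htc w) (huc w) ha hb)

theorem preimage_prodMk_convexJoin_combo_subset {α : Type*} [AddCommGroup α] [Module ℝ α]
    (K : Set (α × ℝ)) {a b : α × ℝ} (hab : a.1 = b.1) {la lb : ℝ} (h : la + lb = 1) (w : α) :
    Prod.mk w ⁻¹' convexJoin ℝ {la • a + lb • b} K ⊆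
      la • Prod.mk w ⁻¹' convexJoin ℝ {a} K + lb • Prod.mk w ⁻¹' convexJoin ℝ {b} K := by
  intro y hy
  obtain ⟨_, rfl, k, hk, μ, ν, hμ, hν, hμν, hwy⟩ := mem_convexJoin.1 hy
  have hmem : ∀ c, c.1 = a.1 → (μ • c + ν • k).2 ∈ Prod.mk w ⁻¹' convexJoin ℝ {c} K := by
    intro c hc
    have hc' : (w, (μ • c + ν • k).2) = μ • c + ν • k := by
      refine Prod.ext ?_ rfl
      rw [← congrArg Prod.fst hwy]
      simp only [Prod.fst_add, Prod.smul_fst, hc, hab, ← add_smul, h, one_smul]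
    rw [mem_preimage, hc']
    exact mem_convexJoin.2 ⟨c, rfl, k, hk, μ, ν, hμ, hν, hμν, rfl⟩
  refine ⟨_, ⟨_, hmem a rfl, rfl⟩, _, ⟨_, hmem b hab.symm, rfl⟩, ?_⟩
  have hy : y = (μ • (la • a + lb • b) + ν • k).2 := by rw [hwy]
  simp only [hy, Prod.snd_add, Prod.smul_snd, smul_eq_mul]
  linear_combination (ν * k.2) * h

theorem addHaar_convexHull_insert_combo_le_of_fst_eq {V : Type*} [NormedAddCommGroup V]
    [NormedSpace ℝ V] [FiniteDimensional ℝ V] [MeasurableSpace V] [BorelSpace V]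
    (ρ : Measure (V × ℝ)) [ρ.IsAddHaarMeasure] {F : Set (V × ℝ)} (hF : F.Finite)
    {a b : V × ℝ} (hab : a.1 = b.1) {la lb : ℝ} (hla : 0 ≤ la) (hlb : 0 ≤ lb) (h : la + lb = 1) :
    ρ (convexHull ℝ (insert (la • a + lb • b) F)) ≤
      ENNReal.ofReal la * ρ (convexHull ℝ (insert a F)) +
        ENNReal.ofReal lb * ρ (convexHull ℝ (insert b F)) := by
  rw [ρ.isAddLeftInvariant_eq_smul ((Measure.addHaar : Measure V).prod volume)]
  simp only [Measure.smul_apply, ENNReal.smul_def, smul_eq_mul, mul_left_comm (ENNReal.ofReal _),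
    ← mul_add]
  gcongr
  rcases F.eq_empty_or_nonempty with rfl | hFne
  · simp
  have hmeas : ∀ x, MeasurableSet (convexJoin ℝ {x} (convexHull ℝ F)) := fun x => by
    rw [← convexHull_insert hFne]
    exact (hF.insert x).isCompact_convexHull (𝕜 := ℝ) |>.isClosed.measurableSet
  have hslice : ∀ x w, (Prod.mk w ⁻¹' convexJoin ℝ {x} (convexHull ℝ F)).OrdConnected :=
    fun x => ((convex_singleton x).convexJoin (convex_convexHull ℝ F)).ordConnected_preimage_prodMk
  simp only [convexHull_insert hFne]
  exact Measure.prod_volume_le_of_preimage_prodMk_subset _ (hmeas _) (hmeas _) (hmeas _)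
    (hslice a) (hslice b) hla hlb (preimage_prodMk_convexJoin_combo_subset _ hab h)

section FiniteDimensional

variable {E : Type*} [NormedAddCommGroup E] [NormedSpace ℝ E] [FiniteDimensional ℝ E]

theorem exists_continuousLinearEquiv_prod_fst_eq_zero {u : E} (hu : u ≠ 0) :
    ∃ (V : Submodule ℝ E) (T : E ≃L[ℝ] V × ℝ), (T u).1 = 0 := by
  obtain ⟨V, hV⟩ := Submodule.exists_isCompl (ℝ ∙ u)
  let T : E ≃ₗ[ℝ] V × ℝ := (Submodule.prodEquivOfIsCompl V (ℝ ∙ u) hV.symm).symm.trans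
    ((LinearEquiv.refl ℝ V).prodCongr (LinearEquiv.toSpanNonzeroSingleton ℝ E u hu).symm)
  exact ⟨V, T.toContinuousLinearEquiv,
    (Submodule.prodEquivOfIsCompl_symm_apply_fst_eq_zero _ _ hV.symm).2
      (Submodule.mem_span_singleton_self u)⟩

variable [MeasurableSpace E] [BorelSpace E] (μ : Measure E) [μ.IsAddHaarMeasure]

theorem addHaar_convexHull_insert_combo_le {F : Set E} (hF : F.Finite) (a b : E) {la lb : ℝ}
    (hla : 0 ≤ la) (hlb : 0 ≤ lb) (h : la + lb = 1) :
    μ (convexHull ℝ (insert (la • a + lb • b) F)) ≤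
      ENNReal.ofReal la * μ (convexHull ℝ (insert a F)) +
        ENNReal.ofReal lb * μ (convexHull ℝ (insert b F)) := by
  rcases eq_or_ne a b with rfl | hne
  · rw [Convex.combo_self h, ← add_mul, ← ENNReal.ofReal_add hla hlb, h, ENNReal.ofReal_one,
      one_mul]
  obtain ⟨V, T, hT⟩ := exists_continuousLinearEquiv_prod_fst_eq_zero (sub_ne_zero.2 hne.symm)
  have hvol : ∀ S, μ S = μ.map T (T '' S) := fun S =>
    (congrArg μ (T.preimage_image S)).symm.trans
      (T.toHomeomorph.measurableEmbedding.map_apply μ _).symm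
  have himg : ∀ x, T '' convexHull ℝ (insert x F) = convexHull ℝ (insert (T x) (T '' F)) :=
    fun x => ((T : E →ₗ[ℝ] V × ℝ).image_convexHull _).trans (by rw [image_insert_eq]; rfl)
  have hfst : (T a).1 = (T b).1 := by
    rw [map_sub, Prod.fst_sub, sub_eq_zero] at hT
    exact hT.symm
  simp only [hvol, himg, map_add, map_smul]
  exact addHaar_convexHull_insert_combo_le_of_fst_eq _ (hF.image T) hfst hla hlb h

theorem convexOn_addHaar_convexHull_insert {F : Set E} (hF : F.Finite) :
    ConvexOn ℝ univ fun x => (μ (convexHull ℝ (insert x F))).toReal := by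
  have hfin : ∀ x, μ (convexHull ℝ (insert x F)) ≠ ⊤ := fun x =>
    ((hF.insert x).isCompact_convexHull (𝕜 := ℝ)).measure_lt_top.ne
  refine ⟨convex_univ, fun a _ b _ la lb hla hlb h => ?_⟩
  have hfin' : ∀ (l : ℝ) x, ENNReal.ofReal l * μ (convexHull ℝ (insert x F)) ≠ ⊤ :=
    fun _ x => ENNReal.mul_ne_top ENNReal.ofReal_ne_top (hfin x)
  calc (μ (convexHull ℝ (insert (la • a + lb • b) F))).toReal
      ≤ (ENNReal.ofReal la * μ (convexHull ℝ (insert a F)) +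
          ENNReal.ofReal lb * μ (convexHull ℝ (insert b F))).toReal :=
        ENNReal.toReal_mono (ENNReal.add_ne_top.2 ⟨hfin' la a, hfin' lb b⟩)
          (addHaar_convexHull_insert_combo_le μ hF a b hla hlb h)
    _ = _ := by
      rw [ENNReal.toReal_add (hfin' la a) (hfin' lb b), ENNReal.toReal_mul, ENNReal.toReal_mul,
        ENNReal.toReal_ofReal hla, ENNReal.toReal_ofReal hlb, smul_eq_mul, smul_eq_mul]

end FiniteDimensional

theorem Function.range_update_eq_insert {ι α : Type*} [DecidableEq ι] (q : ι → α) (j : ι) (x : α) :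
    range (update q j x) = insert x (q '' {j}ᶜ) := by
  rw [← image_univ, ← insert_sdiff_self_of_mem (mem_univ j), image_insert_eq, update_self,
    ← compl_eq_univ_sdiff]
  exact congrArg _ (EqOn.image_eq fun i hi => update_of_ne hi x q)

section Selection

variable {ι 𝕜 E β : Type*} [Fintype ι] [DecidableEq ι] [Field 𝕜] [LinearOrder 𝕜]
  [IsStrictOrderedRing 𝕜] [AddCommGroup E] [Module 𝕜 E] [AddCommGroup β] [LinearOrder β]
  [IsOrderedAddMonoid β] [Module 𝕜 β] [IsStrictOrderedModule 𝕜 β]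
  {f : (ι → E) → β} {S : ι → Set E}

theorem exists_forall_mem_le_of_convexOn_update
    (hf : ∀ q j, ConvexOn 𝕜 univ fun x => f (update q j x)) {q : ι → E}
    (hq : ∀ i, q i ∈ convexHull 𝕜 (S i)) : ∃ p, (∀ i, p i ∈ S i) ∧ f q ≤ f p := by
  suffices key : ∀ s : Finset ι, ∀ q : ι → E, (∀ i, q i ∈ convexHull 𝕜 (S i)) →
      (∀ i ∉ s, q i ∈ S i) → ∃ p, (∀ i, p i ∈ S i) ∧ f q ≤ f p from
    key Finset.univ q hq fun i hi => absurd (Finset.mem_univ i) hi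
  intro s
  induction s using Finset.induction_on with
  | empty => exact fun q _ hqS => ⟨q, fun i => hqS i (Finset.notMem_empty i), le_rfl⟩
  | insert j s _ ih =>
    intro q hq hqS
    obtain ⟨e, he, hle⟩ := (hf q j).exists_ge_of_mem_convexHull (subset_univ _) (hq j)
    rw [update_eq_self] at hle
    obtain ⟨p, hp, hlep⟩ := ih (update q j e)
      ((forall_update_iff q fun i y => y ∈ convexHull 𝕜 (S i)).2
        ⟨subset_convexHull 𝕜 _ he, fun i _ => hq i⟩)
      ((forall_update_iff q fun i y => i ∉ s → y ∈ S i).2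
        ⟨fun _ => he, fun i hij his => hqS i (by simp [hij, his])⟩)
    exact ⟨p, hp, hle.trans hlep⟩

theorem exists_forall_mem_forall_le_of_convexOn_update
    (hf : ∀ q j, ConvexOn 𝕜 univ fun x => f (update q j x)) (hS : ∀ i, (S i).Finite)
    (hSne : ∀ i, (S i).Nonempty) :
    ∃ p, (∀ i, p i ∈ S i) ∧ ∀ q, (∀ i, q i ∈ convexHull 𝕜 (S i)) → f q ≤ f p := by
  obtain ⟨p, hp, hmax⟩ := exists_max_image {p | ∀ i, p i ∈ S i} f (Finite.pi' hS)
    ⟨fun i => (hSne i).some, fun i => (hSne i).some_mem⟩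
  refine ⟨p, hp, fun q hq => ?_⟩
  obtain ⟨p', hp', hle⟩ := exists_forall_mem_le_of_convexOn_update hf hq
  exact hle.trans (hmax p' hp')

end Selection

theorem Set.Finite.convexHull_extremePoints_convexHull {E : Type*} [AddCommGroup E] [Module ℝ E]
    [TopologicalSpace E] [T2Space E] [IsTopologicalAddGroup E] [ContinuousSMul ℝ E]
    [LocallyConvexSpace ℝ E] {C : Set E} (hC : C.Finite) :
    convexHull ℝ ((convexHull ℝ C).extremePoints ℝ) = convexHull ℝ C := by
  have hfin : ((convexHull ℝ C).extremePoints ℝ).Finite :=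
    hC.subset extremePoints_convexHull_subset
  simpa [(hfin.isCompact_convexHull (𝕜 := ℝ)).isClosed.closure_eq] using
    closure_convexHull_extremePoints (hC.isCompact_convexHull (𝕜 := ℝ)) (convex_convexHull ℝ C)

/-- Among all selections of one point from the convex hull of each cluster, there is an
area-maximizing selection using only extreme points of the cluster hulls. -/
theorem max_area_selection_extreme (n : ℕ)
    (C : Fin n → Finset (EuclideanSpace ℝ (Fin 2))) (hC : ∀ i, (C i).Nonempty) :
    ∃ p : Fin n → EuclideanSpace ℝ (Fin 2),
      (∀ i, p i ∈ Set.extremePoints ℝ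
        (convexHull ℝ (↑(C i) : Set (EuclideanSpace ℝ (Fin 2))))) ∧
      ∀ q : Fin n → EuclideanSpace ℝ (Fin 2),
        (∀ i, q i ∈ convexHull ℝ (↑(C i) : Set (EuclideanSpace ℝ (Fin 2)))) →
        volume (convexHull ℝ (Set.range q)) ≤ volume (convexHull ℝ (Set.range p)) := by
  have hconv : ∀ (q : Fin n → EuclideanSpace ℝ (Fin 2)) j,
      ConvexOn ℝ univ fun x => (volume (convexHull ℝ (range (update q j x)))).toReal :=
    fun q j => by
      simpa only [range_update_eq_insert] using
        convexOn_addHaar_convexHull_insert volume (toFinite (q '' {j}ᶜ))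
  obtain ⟨p, hp, hmax⟩ := exists_forall_mem_forall_le_of_convexOn_update
    (f := fun r => (volume (convexHull ℝ (range r))).toReal) hconv
    (fun i => (C i).finite_toSet.subset extremePoints_convexHull_subset)
    (fun i => ((C i).finite_toSet.isCompact_convexHull (𝕜 := ℝ)).extremePoints_nonempty
      (Finset.coe_nonempty.2 (hC i)).convexHull)
  refine ⟨p, hp, fun q hq => ?_⟩
  have hle := hmax q fun i => by
    rw [(C i).finite_toSet.convexHull_extremePoints_convexHull]; exact hq i
  have hfin : ∀ r : Fin n → EuclideanSpace ℝ (Fin 2), volume (convexHull ℝ (range r)) ≠ ⊤ :=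
    fun r => ((finite_range r).isCompact_convexHull (𝕜 := ℝ)).measure_lt_top.ne
  exact (ENNReal.toReal_le_toReal (hfin q) (hfin p)).1 hle
end

section
/- Angle separation between consecutive rational circle points: for integers i with 1 ≤ i ≤ N and s = 100N² (N a positive integer), the polar angle of p_{5i+1} plus three times the polar angle of p_s is less than the polar angle of p_{5i−4}, where p_t = ((t²−1)/(t²+1), 2t/(t²+1)) has polar angle θ_t = arctan(2t/(t²−1)) for t > 1. Equivalently, θ_{5i−4} − θ_{5i+1} > 3·θ_s. -/
/-- Polar angle of the rational circle point `p_t`. -/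
noncomputable def theta (t : ℝ) : ℝ := Real.arcsin (2 * t / (t ^ 2 + 1))

lemma ratio_mem (t : ℝ) (ht : 1 ≤ t) :
    -1 ≤ 2 * t / (t ^ 2 + 1) ∧ 2 * t / (t ^ 2 + 1) ≤ 1 := by
  have hpos : (0:ℝ) < t ^ 2 + 1 := by positivity
  constructor
  · rw [neg_le, ← neg_div, div_le_one hpos]; nlinarith
  · rw [div_le_one hpos]; nlinarith [sq_nonneg (t - 1)]

lemma sin_theta (t : ℝ) (ht : 1 ≤ t) : Real.sin (theta t) = 2 * t / (t ^ 2 + 1) :=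
  Real.sin_arcsin (ratio_mem t ht).1 (ratio_mem t ht).2

lemma cos_theta (t : ℝ) (ht : 1 ≤ t) : Real.cos (theta t) = (t ^ 2 - 1) / (t ^ 2 + 1) := by
  have hpos : (0:ℝ) < t ^ 2 + 1 := by positivity
  have hnum : (0:ℝ) ≤ (t ^ 2 - 1) / (t ^ 2 + 1) := div_nonneg (by nlinarith) hpos.le
  rw [theta, Real.cos_arcsin]
  have h1 : 1 - (2 * t / (t ^ 2 + 1)) ^ 2 = ((t ^ 2 - 1) / (t ^ 2 + 1)) ^ 2 := by
    field_simp; ring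
  rw [h1, Real.sqrt_sq hnum]

lemma theta_nonneg (t : ℝ) (ht : 1 ≤ t) : 0 ≤ theta t :=
  Real.arcsin_nonneg.2 (by positivity)

lemma theta_anti {a b : ℝ} (ha : 1 ≤ a) (hab : a ≤ b) : theta b ≤ theta a := by
  have hb : 1 ≤ b := ha.trans hab
  apply Real.monotone_arcsin
  rw [div_le_div_iff₀ (by positivity) (by positivity)]
  nlinarith [mul_nonneg (sub_nonneg.2 hab) (sub_nonneg.2 (one_le_mul_of_one_le_of_one_le ha hb))]

set_option maxHeartbeats 1000000 in
lemma angle_separation_real (x n : ℝ) (hx : 1 ≤ x) (hxn : x ≤ n) :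
    theta (5 * x - 4) - theta (5 * x + 1) > 3 * theta (100 * n ^ 2) := by
  have hn1 : (1:ℝ) ≤ n := hx.trans hxn
  have ha : (1:ℝ) ≤ 5 * x - 4 := by linarith
  have hb : (1:ℝ) ≤ 5 * x + 1 := by linarith
  have hab : 5 * x - 4 ≤ 5 * x + 1 := by linarith
  have hs : (1:ℝ) ≤ 100 * n ^ 2 := by nlinarith
  have hspos : (0:ℝ) < 100 * n ^ 2 := by positivity
  have hAB : theta (5 * x + 1) ≤ theta (5 * x - 4) := theta_anti ha hab
  -- lower bound for the gap
  have hsin : Real.sin (theta (5 * x - 4) - theta (5 * x + 1))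
      = 10 * ((5 * x - 4) * (5 * x + 1) + 1)
        / (((5 * x - 4) ^ 2 + 1) * ((5 * x + 1) ^ 2 + 1)) := by
    rw [Real.sin_sub, sin_theta _ ha, sin_theta _ hb, cos_theta _ ha, cos_theta _ hb]
    have h1 : ((5 * x - 4) ^ 2 + 1 : ℝ) ≠ 0 := by positivity
    have h2 : ((5 * x + 1) ^ 2 + 1 : ℝ) ≠ 0 := by positivity
    field_simp
    ring
  have hgap : 10 * ((5 * x - 4) * (5 * x + 1) + 1)
        / (((5 * x - 4) ^ 2 + 1) * ((5 * x + 1) ^ 2 + 1))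
      ≤ theta (5 * x - 4) - theta (5 * x + 1) := by
    rw [← hsin]; exact Real.sin_le (sub_nonneg.2 hAB)
  -- upper bound for theta s
  have hθs0 : 0 ≤ theta (100 * n ^ 2) := theta_nonneg _ hs
  have hθs2 : theta (100 * n ^ 2) ≤ Real.pi / 2 := Real.arcsin_le_pi_div_two _
  have hJ : 2 / Real.pi * theta (100 * n ^ 2) ≤ Real.sin (theta (100 * n ^ 2)) :=
    Real.mul_le_sin hθs0 hθs2
  have hπ : (0:ℝ) < Real.pi := Real.pi_pos
  have hπ315 : Real.pi < 3.15 := by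
    have := Real.pi_lt_d2
    linarith
  have hθs_le : theta (100 * n ^ 2)
      ≤ Real.pi / 2 * (2 * (100 * n ^ 2) / ((100 * n ^ 2) ^ 2 + 1)) := by
    rw [← sin_theta _ hs]
    have h := mul_le_mul_of_nonneg_left hJ (le_of_lt (by positivity : (0:ℝ) < Real.pi / 2))
    have hππ : Real.pi / 2 * (2 / Real.pi * theta (100 * n ^ 2)) = theta (100 * n ^ 2) := by
      field_simp
    linarith [h, hππ]
  have hfrac : 2 * (100 * n ^ 2) / ((100 * n ^ 2) ^ 2 + 1) < 2 / (100 * n ^ 2) := by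
    rw [div_lt_div_iff₀ (by positivity) hspos]
    nlinarith
  have hθs_lt : 3 * theta (100 * n ^ 2) < 10 / (100 * n ^ 2) := by
    have h2 : Real.pi / 2 * (2 * (100 * n ^ 2) / ((100 * n ^ 2) ^ 2 + 1))
        < Real.pi / 2 * (2 / (100 * n ^ 2)) :=
      mul_lt_mul_of_pos_left hfrac (by positivity)
    have h3 : Real.pi / 2 * (2 / (100 * n ^ 2)) = Real.pi / (100 * n ^ 2) := by
      field_simp
    have h4 : 3 * (Real.pi / (100 * n ^ 2)) < 10 / (100 * n ^ 2) := by
      rw [mul_div_assoc']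
      rw [div_lt_div_iff₀ hspos hspos]
      nlinarith
    nlinarith [hθs_le, h2, h3 ▸ h2, h4]
  -- polynomial comparison
  have hfac : (0:ℝ) ≤ (5 * x - 4) * (5 * x + 1) + 1 := by nlinarith
  have hsq : x ^ 2 ≤ n ^ 2 := by nlinarith
  have hpoly : 10 / (100 * n ^ 2)
      ≤ 10 * ((5 * x - 4) * (5 * x + 1) + 1)
        / (((5 * x - 4) ^ 2 + 1) * ((5 * x + 1) ^ 2 + 1)) := by
    have hx2 : x ≤ x ^ 2 := by nlinarith
    have hx3 : x ^ 2 ≤ x ^ 3 := by nlinarith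
    have hx4 : x ^ 3 ≤ x ^ 4 := by nlinarith
    have hfac2 : (0:ℝ) ≤ 25 * x ^ 2 - 15 * x - 3 := by nlinarith
    have hkey : 1000 * (x ^ 2 * (25 * x ^ 2 - 15 * x - 3))
        ≤ 1000 * (n ^ 2 * (25 * x ^ 2 - 15 * x - 3)) := by
      have := mul_le_mul_of_nonneg_right hsq hfac2
      linarith
    rw [div_le_div_iff₀ hspos (by positivity)]
    nlinarith [hkey, hx2, hx3, hx4]
  linarith

/-- Angle separation between consecutive variable-gadget reference points:
`θ_{5i−4} − θ_{5i+1} > 3 θ_s` for `s = 100 N²`. -/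
theorem angle_separation (N : ℕ) (hN : 0 < N) (i : ℕ) (hi1 : 1 ≤ i) (hiN : i ≤ N) :
    theta (5 * (i : ℝ) - 4) - theta (5 * (i : ℝ) + 1) >
      3 * theta (100 * (N : ℝ) ^ 2) := by
  exact angle_separation_real (i : ℝ) (N : ℝ) (by exact_mod_cast hi1) (by exact_mod_cast hiN)
end
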